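/- arXiv:0705.1345 — 2 statements merged into one kernel-verified Lean document; each statement's English description precedes it below -/
import Mathlib

section
/- Let X and Y be independent real random variables, α > 0, and Z = sign(X)·sign(Y)·min(|X|,|Y|) (with X, Y almost surely nonzero). Then E[e^{−αZ}] ≤ E[e^{−αX}] + E[e^{−αY}]. -/
open MeasureTheory ProbabilityTheory Real

/-! Whatever the signs of `x` and `y`, the min-sum output `sign x * sign y * min |x| |y|` is at
least `min x y`. Hence, for `α ≥ 0`, its `exp (-α ·)` is at most
`max (exp (-α x)) (exp (-α y)) ≤ exp (-α x) + exp (-α y)` pointwise, and integrating this bound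
gives the theorem. -/

theorem min_le_sign_mul_sign_mul_min_abs (x y : ℝ) :
    min x y ≤ Real.sign x * Real.sign y * min |x| |y| := by
  rcases lt_trichotomy x 0 with hx | rfl | hx <;>
    rcases lt_trichotomy y 0 with hy | rfl | hy <;>
    simp only [Real.sign_of_neg, Real.sign_of_pos, Real.sign_zero, abs_of_neg, abs_of_pos,
      abs_zero, *] <;>
    grind

theorem exp_neg_mul_minSum_le {α : ℝ} (hα : 0 ≤ α) (x y : ℝ) :
    exp (-α * (Real.sign x * Real.sign y * min |x| |y|)) ≤ exp (-α * x) + exp (-α * y) :=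
  calc exp (-α * (Real.sign x * Real.sign y * min |x| |y|))
      ≤ exp (-α * min x y) :=
        exp_le_exp.2 <|
          mul_le_mul_of_nonpos_left (min_le_sign_mul_sign_mul_min_abs x y) (neg_nonpos.2 hα)
    _ ≤ exp (-α * x) + exp (-α * y) := by
        rcases le_total x y with h | h
        · rw [min_eq_left h]; exact le_add_of_nonneg_right (exp_nonneg _)
        · rw [min_eq_right h]; exact le_add_of_nonneg_left (exp_nonneg _)

theorem exp_moment_subadd_minsum_general
    {Ω : Type*} [MeasureSpace Ω]
    (X Y : Ω → ℝ)
    (α : ℝ) (hα : 0 < α)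
    (hXi : Integrable (fun ω => Real.exp (-α * X ω)) ℙ)
    (hYi : Integrable (fun ω => Real.exp (-α * Y ω)) ℙ) :
    (∫ ω, Real.exp (-α * (Real.sign (X ω) * Real.sign (Y ω) * min |X ω| |Y ω|)))
      ≤ (∫ ω, Real.exp (-α * X ω)) + ∫ ω, Real.exp (-α * Y ω) := by
  rw [← integral_add hXi hYi]
  exact integral_mono_of_nonneg (.of_forall fun ω => (exp_pos _).le) (hXi.add hYi)
    (.of_forall fun ω => exp_neg_mul_minSum_le hα.le (X ω) (Y ω))

/-- Subadditivity of the functional `B_α(W) = E[exp(-αW)]`, `α > 0`, under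
the min-sum check node operation `Z = sign(X) sign(Y) min(|X|,|Y|)`. -/
theorem exp_moment_subadd_minsum
    {Ω : Type*} [MeasureSpace Ω] [IsProbabilityMeasure (ℙ : Measure Ω)]
    (X Y : Ω → ℝ) (hX : Measurable X) (hY : Measurable Y)
    (hindep : IndepFun X Y ℙ)
    (hXne : ∀ᵐ ω ∂ℙ, X ω ≠ 0) (hYne : ∀ᵐ ω ∂ℙ, Y ω ≠ 0)
    (α : ℝ) (hα : 0 < α)
    (hXi : Integrable (fun ω => Real.exp (-α * X ω)) ℙ)
    (hYi : Integrable (fun ω => Real.exp (-α * Y ω)) ℙ) :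
    (∫ ω, Real.exp (-α * (Real.sign (X ω) * Real.sign (Y ω) * min |X ω| |Y ω|)))
      ≤ (∫ ω, Real.exp (-α * X ω)) + ∫ ω, Real.exp (-α * Y ω) :=
  exp_moment_subadd_minsum_general X Y α hα hXi hYi
end

section
/- Let a and b be probability densities on ℝ satisfying a(x) ≥ a(−x) and b(x) ≥ b(−x) for all x > 0, and let c(x) = a(x)·Q_b(|x|) + b(x)·Q_a(|x|) + a(−x)·R_b(|x|) + b(−x)·R_a(|x|), where Q_f(t) = ∫_t^∞ f(s) ds and R_f(t) = ∫_{−∞}^{−t} f(s) ds. Then for all x > 0, c(x) − c(−x) = (a(x) − a(−x))(Q_b(x) − R_b(x)) + (b(x) − b(−x))(Q_a(x) − R_a(x)) ≥ 0. -/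
open MeasureTheory Real

theorem setIntegral_Iio_neg_le_setIntegral_Ioi {f : ℝ → ℝ} (hf : Integrable f) {x : ℝ}
    (h : ∀ s > x, f (-s) ≤ f s) :
    ∫ s in Set.Iio (-x), f s ≤ ∫ s in Set.Ioi x, f s := by
  rw [← integral_Iic_eq_integral_Iio, ← integral_comp_neg_Ioi]
  exact setIntegral_mono_on hf.comp_neg.restrict hf.restrict measurableSet_Ioi h

theorem minsum_check_asymmetry_identity_general
    (a b c : ℝ → ℝ)
    (hai : Integrable a) (hbi : Integrable b)
    (habias : ∀ x > (0:ℝ), a (-x) ≤ a x)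
    (hbbias : ∀ x > (0:ℝ), b (-x) ≤ b x)
    (hc : ∀ x : ℝ, c x =
      a x * (∫ s in Set.Ioi |x|, b s) + b x * (∫ s in Set.Ioi |x|, a s)
        + a (-x) * (∫ s in Set.Iio (-|x|), b s)
        + b (-x) * (∫ s in Set.Iio (-|x|), a s)) :
    ∀ x > (0:ℝ),
      (c x - c (-x)
          = (a x - a (-x)) * ((∫ s in Set.Ioi x, b s) - ∫ s in Set.Iio (-x), b s)
            + (b x - b (-x)) * ((∫ s in Set.Ioi x, a s) - ∫ s in Set.Iio (-x), a s))
        ∧ 0 ≤ c x - c (-x) := by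
  intro x hx
  have hid : c x - c (-x)
      = (a x - a (-x)) * ((∫ s in Set.Ioi x, b s) - ∫ s in Set.Iio (-x), b s)
        + (b x - b (-x)) * ((∫ s in Set.Ioi x, a s) - ∫ s in Set.Iio (-x), a s) := by
    rw [hc x, hc (-x), abs_neg, abs_of_pos hx, neg_neg]
    ring
  have hQRa := setIntegral_Iio_neg_le_setIntegral_Ioi hai fun s hs ↦ habias s (hx.trans hs)
  have hQRb := setIntegral_Iio_neg_le_setIntegral_Ioi hbi fun s hs ↦ hbbias s (hx.trans hs)
  refine ⟨hid, hid ▸ add_nonneg ?_ ?_⟩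
  · exact mul_nonneg (sub_nonneg.2 (habias x hx)) (sub_nonneg.2 hQRb)
  · exact mul_nonneg (sub_nonneg.2 (hbbias x hx)) (sub_nonneg.2 hQRa)

/-- Asymmetry identity and nonnegativity for the min-sum check node output
density. -/
theorem minsum_check_asymmetry_identity
    (a b c : ℝ → ℝ)
    (ha0 : ∀ x, 0 ≤ a x) (hb0 : ∀ x, 0 ≤ b x)
    (hai : Integrable a) (hbi : Integrable b)
    (ha1 : ∫ x, a x = 1) (hb1 : ∫ x, b x = 1)
    (habias : ∀ x > (0:ℝ), a (-x) ≤ a x)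
    (hbbias : ∀ x > (0:ℝ), b (-x) ≤ b x)
    (hc : ∀ x : ℝ, c x =
      a x * (∫ s in Set.Ioi |x|, b s) + b x * (∫ s in Set.Ioi |x|, a s)
        + a (-x) * (∫ s in Set.Iio (-|x|), b s)
        + b (-x) * (∫ s in Set.Iio (-|x|), a s)) :
    ∀ x > (0:ℝ),
      (c x - c (-x)
          = (a x - a (-x)) * ((∫ s in Set.Ioi x, b s) - ∫ s in Set.Iio (-x), b s)
            + (b x - b (-x)) * ((∫ s in Set.Ioi x, a s) - ∫ s in Set.Iio (-x), a s))
        ∧ 0 ≤ c x - c (-x) :=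
  minsum_check_asymmetry_identity_general a b c hai hbi habias hbbias hc
end
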